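/- Let g : ℝ → ℂ be measurable with e^{tx} g(x) ∈ L¹(ℝ) for all t > 0 and g not zero a.e. If there exist α₁, …, α_N > 0, c₁, …, c_N ∈ ℂ, β₁, …, β_N ∈ ℝ with g(x) = ∑_{k=1}^N c_k e^{2πiβ_k x} g(x+α_k) a.e., then for every t > 0 we have 1 ≤ ∑_{k=1}^N |c_k| e^{−t α_k}. -/

import Mathlib

/-!
The weight `e^{tx} ‖g x‖` is integrable, and `F = ∫ e^{tx} ‖g x‖ dx > 0` since `g` is not
a.e. zero. Taking norms in the dependence relation (the phases `e^{2πiβₖx}` have modulus one)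
gives `‖g x‖ ≤ ∑ₖ ‖cₖ‖ ‖g (x + αₖ)‖` a.e. Multiplying by `e^{tx}` and integrating, translation
invariance of Lebesgue measure turns the `k`-th term into `‖cₖ‖ e^{-tαₖ} F`, so
`F ≤ (∑ₖ ‖cₖ‖ e^{-tαₖ}) F`, and dividing by `F` gives the claim.
-/

open MeasureTheory Real

lemma exp_mul_mul_comp_add_right (t a x : ℝ) (φ : ℝ → ℝ) :
    exp (t * x) * φ (x + a) = exp (-t * a) * (exp (t * (x + a)) * φ (x + a)) := by
  rw [← mul_assoc, ← exp_add]
  ring_nf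

lemma MeasureTheory.Integrable.exp_mul_comp_add_right {t : ℝ} {φ : ℝ → ℝ}
    (hφ : Integrable (fun x => exp (t * x) * φ x)) (a : ℝ) :
    Integrable (fun x => exp (t * x) * φ (x + a)) := by
  simpa only [← exp_mul_mul_comp_add_right] using
    (hφ.comp_add_right a).const_mul (exp (-t * a))

lemma integral_exp_mul_comp_add_right (t a : ℝ) (φ : ℝ → ℝ) :
    ∫ x, exp (t * x) * φ (x + a) = exp (-t * a) * ∫ x, exp (t * x) * φ x := by
  simp only [exp_mul_mul_comp_add_right t a _ φ, integral_const_mul,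
    integral_add_right_eq_self (fun x => exp (t * x) * φ x)]

lemma integral_exp_mul_le_of_ae_le_sum_comp_add_right {ι : Type*} (s : Finset ι)
    {t : ℝ} {φ : ℝ → ℝ} (a α : ι → ℝ) (hφ : Integrable (fun x => exp (t * x) * φ x))
    (hle : ∀ᵐ x, φ x ≤ ∑ k ∈ s, a k * φ (x + α k)) :
    ∫ x, exp (t * x) * φ x ≤ (∑ k ∈ s, a k * exp (-t * α k)) * ∫ x, exp (t * x) * φ x := by
  have hshift (k : ι) : Integrable (fun x => a k * (exp (t * x) * φ (x + α k))) :=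
    (hφ.exp_mul_comp_add_right (α k)).const_mul (a k)
  calc ∫ x, exp (t * x) * φ x
      ≤ ∫ x, ∑ k ∈ s, a k * (exp (t * x) * φ (x + α k)) := by
        refine integral_mono_ae hφ (integrable_finsetSum s fun k _ => hshift k) ?_
        filter_upwards [hle] with x hx
        calc exp (t * x) * φ x ≤ exp (t * x) * ∑ k ∈ s, a k * φ (x + α k) := by gcongr
          _ = _ := by simp only [Finset.mul_sum, mul_left_comm]
    _ = (∑ k ∈ s, a k * exp (-t * α k)) * ∫ x, exp (t * x) * φ x := by
        simp only [integral_finsetSum s fun k _ => hshift k, integral_const_mul,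
          integral_exp_mul_comp_add_right, Finset.sum_mul, mul_assoc]

lemma integral_exp_mul_norm_pos {E : Type*} [NormedAddCommGroup E] {g : ℝ → E} {t : ℝ}
    (hi : Integrable (fun x => exp (t * x) * ‖g x‖)) (hg : ¬ g =ᵐ[volume] 0) :
    0 < ∫ x, exp (t * x) * ‖g x‖ := by
  refine (integral_nonneg fun x => by positivity).lt_of_ne' fun h0 => hg ?_
  filter_upwards [(integral_eq_zero_iff_of_nonneg (fun x => by positivity) hi).mp h0] with x hx
  simpa [exp_ne_zero] using hx

lemma norm_sum_mul_unimodular_mul_le {ι : Type*} (s : Finset ι) (c u w : ι → ℂ)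
    (hu : ∀ k, ‖u k‖ = 1) : ‖∑ k ∈ s, c k * u k * w k‖ ≤ ∑ k ∈ s, ‖c k‖ * ‖w k‖ :=
  (norm_sum_le _ _).trans_eq <| Finset.sum_congr rfl fun k _ => by simp [hu]

lemma Complex.norm_exp_two_pi_I_mul (β x : ℝ) :
    ‖Complex.exp (2 * π * Complex.I * β * x)‖ = 1 := by
  simp [Complex.norm_exp]

theorem hrt_exponential_decay_coefficient_bound_general (g : ℝ → ℂ)
    (hint : ∀ t > 0, Integrable (fun x => (Real.exp (t * x) : ℂ) * g x) volume)
    (hgne : ¬ g =ᵐ[volume] 0)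
    (N : ℕ) (α : Fin N → ℝ)
    (c : Fin N → ℂ) (β : Fin N → ℝ)
    (hdep : ∀ᵐ x ∂volume,
        g x = ∑ k, c k * Complex.exp (2 * π * Complex.I * (β k) * x) *
          g (x + α k)) :
    ∀ t > 0, 1 ≤ ∑ k, ‖c k‖ * Real.exp (-t * α k) := by
  intro t ht
  have hi : Integrable (fun x => exp (t * x) * ‖g x‖) := by
    simpa only [norm_mul, Complex.norm_real, norm_of_nonneg (exp_pos _).le] using (hint t ht).norm
  have hle : ∀ᵐ x, ‖g x‖ ≤ ∑ k, ‖c k‖ * ‖g (x + α k)‖ := by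
    filter_upwards [hdep] with x hx
    rw [hx]
    exact norm_sum_mul_unimodular_mul_le _ _ _ _ fun k => Complex.norm_exp_two_pi_I_mul (β k) x
  have hF := integral_exp_mul_norm_pos hi hgne
  have key := integral_exp_mul_le_of_ae_le_sum_comp_add_right Finset.univ
    (fun k => ‖c k‖) α hi hle
  exact le_of_mul_le_mul_right (by rwa [one_mul]) hF

theorem hrt_exponential_decay_coefficient_bound (g : ℝ → ℂ) (hg : Measurable g)
    (hint : ∀ t > 0, Integrable (fun x => (Real.exp (t * x) : ℂ) * g x) volume)
    (hgne : ¬ g =ᵐ[volume] 0)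
    (N : ℕ) (hN : 0 < N) (α : Fin N → ℝ) (hα : ∀ k, 0 < α k)
    (c : Fin N → ℂ) (β : Fin N → ℝ)
    (hdep : ∀ᵐ x ∂volume,
        g x = ∑ k, c k * Complex.exp (2 * π * Complex.I * (β k) * x) *
          g (x + α k)) :
    ∀ t > 0, 1 ≤ ∑ k, ‖c k‖ * Real.exp (-t * α k) :=
  hrt_exponential_decay_coefficient_bound_general g hint hgne N α c β hdep
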